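/- arXiv:1102.2706 — 3 statements merged into one kernel-verified Lean document; each statement's English description precedes it below -/
import Mathlib

section
/- If x1, y1, x2, y2 are positive reals, then 4·(√(x1y1)/(x1+y1))·(√(x2y2)/(x2+y2)) + (x1/(x1+y1))·(x2/(x2+y2)) + (y1/(x1+y1))·(y2/(x2+y2)) ≤ 3/2. -/
/-!
Normalise each pair: with `a = x / (x + y)` and `b = y / (x + y)` we have `a + b = 1` and
`√(x y) / (x + y) = √(a b)`. For two such pairs put `u = √(a₁ b₁) √(a₂ b₂) = √((a₁ b₂)(a₂ b₁))`.
Since `a₁ a₂ + b₁ b₂ = 1 - (a₁ b₂ + a₂ b₁)`, AM–GM on `a₁ b₂, a₂ b₁` bounds the left-hand side by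
`1 + 2u`, and AM–GM on each pair gives `u ≤ 1/4`.
-/

namespace Real

lemma sqrt_mul_le_half_add {x y : ℝ} (hx : 0 ≤ x) (hy : 0 ≤ y) : √(x * y) ≤ (x + y) / 2 :=
  sqrt_le_iff.mpr ⟨by positivity, by nlinarith [four_mul_le_sq_add x y]⟩

lemma sqrt_mul_div_add_eq_sqrt_div_mul_div {x y : ℝ} (hx : 0 ≤ x) (hy : 0 ≤ y) :
    √(x * y) / (x + y) = √(x / (x + y) * (y / (x + y))) := by
  rw [div_mul_div_comm, sqrt_div' _ (mul_self_nonneg _), sqrt_mul_self (add_nonneg hx hy)]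

end Real

open Real

lemma four_mul_sqrt_mul_sqrt_add_le_of_add_eq_one {a₁ b₁ a₂ b₂ : ℝ}
    (ha₁ : 0 ≤ a₁) (hb₁ : 0 ≤ b₁) (ha₂ : 0 ≤ a₂) (hb₂ : 0 ≤ b₂)
    (h₁ : a₁ + b₁ = 1) (h₂ : a₂ + b₂ = 1) :
    4 * √(a₁ * b₁) * √(a₂ * b₂) + a₁ * a₂ + b₁ * b₂ ≤ 3 / 2 := by
  have h_cross : √(a₁ * b₁) * √(a₂ * b₂) ≤ (a₁ * b₂ + a₂ * b₁) / 2 := by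
    rw [← sqrt_mul (by positivity), show a₁ * b₁ * (a₂ * b₂) = a₁ * b₂ * (a₂ * b₁) by ring]
    exact sqrt_mul_le_half_add (by positivity) (by positivity)
  have h_quarter : √(a₁ * b₁) * √(a₂ * b₂) ≤ 1 / 2 * (1 / 2) := by
    have hs₁ := sqrt_mul_le_half_add ha₁ hb₁
    have hs₂ := sqrt_mul_le_half_add ha₂ hb₂
    rw [h₁] at hs₁
    rw [h₂] at hs₂
    gcongr
  have h_diag : a₁ * a₂ + b₁ * b₂ = 1 - (a₁ * b₂ + a₂ * b₁) := by
    linear_combination (a₂ + b₂) * h₁ + h₂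
  linarith

theorem cross_term_bound (x1 y1 x2 y2 : ℝ)
    (hx1 : 0 < x1) (hy1 : 0 < y1) (hx2 : 0 < x2) (hy2 : 0 < y2) :
    4 * (Real.sqrt (x1 * y1) / (x1 + y1)) * (Real.sqrt (x2 * y2) / (x2 + y2))
      + (x1 / (x1 + y1)) * (x2 / (x2 + y2))
      + (y1 / (x1 + y1)) * (y2 / (x2 + y2)) ≤ 3 / 2 := by
  rw [sqrt_mul_div_add_eq_sqrt_div_mul_div hx1.le hy1.le,
    sqrt_mul_div_add_eq_sqrt_div_mul_div hx2.le hy2.le]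
  exact four_mul_sqrt_mul_sqrt_add_le_of_add_eq_one (by positivity) (by positivity)
    (by positivity) (by positivity) (by field_simp) (by field_simp)
end

section
/- Let β > 0 and K ≥ 1. The function m(f) = β·∑_{k=1}^K f_k² + (1/2)·∑_{k1≠k2} f_{k1}·f_{k2} − 2·∑_{k=1}^K f_k + 1, defined for nonnegative reals f_1,…,f_K (representing the squared norms ‖f_k‖²), satisfies: if β < 1/2, then the infimum of m over the nonnegative orthant equals 1 − 1/β and is attained exactly at points where all coordinates but one are zero, the nonzero one equal to 1/β. -/
/-!
Writing `S = ∑ f k` and `Q = ∑ f k ^ 2`, the off-diagonal sum is `S² - Q`, and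
`m - (1 - 1/β) = (1/2 - β) (S² - Q) + (β S - 1)² / β`.
For nonnegative `f` both terms are nonnegative when `β ≤ 1/2`, and for `β < 1/2` both vanish
exactly when `S = 1/β` and `S² = Q`, i.e. when `f` is supported on a single coordinate of value `1/β`.
-/

open Finset

variable {ι : Type*} [Fintype ι] [DecidableEq ι]

theorem sum_sum_ite_eq_zero_mul {R : Type*} [CommRing R] (f : ι → R) :
    (∑ i, ∑ j, if i = j then 0 else f i * f j) = (∑ i, f i) ^ 2 - ∑ i, f i ^ 2 := by
  have hrow (i : ι) : (∑ j, if i = j then 0 else f i * f j) = f i * ∑ j, f j - f i ^ 2 := by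
    have hsplit (j : ι) : (if i = j then 0 else f i * f j)
        = f i * f j - if i = j then f i * f j else 0 := by
      split_ifs <;> simp
    simp only [hsplit, sum_sub_distrib, sum_ite_eq, mem_univ, if_true, mul_sum, sq]
  simp only [hrow, sum_sub_distrib, ← sum_mul, sq (∑ i, f i)]

section Nonneg

variable {R : Type*} [CommRing R] [LinearOrder R] [IsStrictOrderedRing R] {f : ι → R}

theorem mul_eq_zero_of_sq_sum_eq_sum_sq (hf : ∀ i, 0 ≤ f i)
    (hsq : (∑ i, f i) ^ 2 = ∑ i, f i ^ 2) {i j : ι} (hij : i ≠ j) : f i * f j = 0 := by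
  have hterm_nonneg (i : ι) (j : ι) : 0 ≤ if i = j then 0 else f i * f j := by
    split_ifs
    exacts [le_rfl, mul_nonneg (hf i) (hf j)]
  have hzero : (∑ i, ∑ j, if i = j then 0 else f i * f j) = 0 := by
    rw [sum_sum_ite_eq_zero_mul, hsq, sub_self]
  have hrow := (sum_eq_zero_iff_of_nonneg fun i _ => sum_nonneg fun j _ => hterm_nonneg i j).1
    hzero i (mem_univ i)
  simpa [hij] using (sum_eq_zero_iff_of_nonneg fun j _ => hterm_nonneg i j).1 hrow j (mem_univ j)

theorem exists_eq_sum_of_sq_sum_eq_sum_sq (hf : ∀ i, 0 ≤ f i)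
    (hsq : (∑ i, f i) ^ 2 = ∑ i, f i ^ 2) (hS : ∑ i, f i ≠ 0) :
    ∃ i₀, f i₀ = ∑ i, f i ∧ ∀ i, i ≠ i₀ → f i = 0 := by
  obtain ⟨i₀, -, hi₀⟩ := exists_ne_zero_of_sum_ne_zero hS
  have hsupp (i : ι) (hi : i ≠ i₀) : f i = 0 :=
    (mul_eq_zero.1 (mul_eq_zero_of_sq_sum_eq_sum_sq hf hsq hi.symm)).resolve_left hi₀
  exact ⟨i₀, (Fintype.sum_eq_single i₀ hsupp).symm, hsupp⟩

end Nonneg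

/-- The paper's `m`. -/
noncomputable def separationObjective (β : ℝ) (f : ι → ℝ) : ℝ :=
  β * (∑ k, (f k) ^ 2) + (1 / 2) * (∑ k1, ∑ k2, if k1 = k2 then 0 else f k1 * f k2)
    - 2 * (∑ k, f k) + 1

theorem separationObjective_sub_eq {β : ℝ} (hβ : β ≠ 0) (f : ι → ℝ) :
    separationObjective β f - (1 - 1 / β)
      = (1 / 2 - β) * ((∑ k, f k) ^ 2 - ∑ k, f k ^ 2) + (β * ∑ k, f k - 1) ^ 2 / β := by
  rw [separationObjective, sum_sum_ite_eq_zero_mul]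
  field_simp
  ring

variable {β : ℝ} {f : ι → ℝ}

theorem one_sub_inv_le_separationObjective (hβ0 : 0 < β) (hβ : β ≤ 1 / 2)
    (hf : ∀ k, 0 ≤ f k) : 1 - 1 / β ≤ separationObjective β f := by
  rw [← sub_nonneg, separationObjective_sub_eq hβ0.ne']
  have hoff : 0 ≤ (∑ k, f k) ^ 2 - ∑ k, f k ^ 2 :=
    sub_nonneg.2 (sum_sq_le_sq_sum_of_nonneg fun k _ => hf k)
  have hcoef : 0 ≤ 1 / 2 - β := sub_nonneg.2 hβ
  positivity

theorem separationObjective_eq_iff (hβ0 : 0 < β) (hβ : β < 1 / 2) (hf : ∀ k, 0 ≤ f k) :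
    separationObjective β f = 1 - 1 / β ↔ ∃ k₀, f k₀ = 1 / β ∧ ∀ k, k ≠ k₀ → f k = 0 := by
  rw [← sub_eq_zero, separationObjective_sub_eq hβ0.ne']
  have hoff : 0 ≤ (∑ k, f k) ^ 2 - ∑ k, f k ^ 2 :=
    sub_nonneg.2 (sum_sq_le_sq_sum_of_nonneg fun k _ => hf k)
  have hcoef : 0 < 1 / 2 - β := sub_pos.2 hβ
  constructor
  · intro hzero
    obtain ⟨hoff_zero, hdev_zero⟩ :=
      (add_eq_zero_iff_of_nonneg (by positivity) (by positivity)).1 hzero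
    have hsq : (∑ k, f k) ^ 2 = ∑ k, f k ^ 2 :=
      sub_eq_zero.1 ((mul_eq_zero.1 hoff_zero).resolve_left hcoef.ne')
    have hS : ∑ k, f k = 1 / β := by
      rw [div_eq_zero_iff, pow_eq_zero_iff two_ne_zero, sub_eq_zero] at hdev_zero
      rw [eq_div_iff hβ0.ne', mul_comm]
      exact hdev_zero.resolve_right hβ0.ne'
    rw [← hS]
    exact exists_eq_sum_of_sq_sum_eq_sum_sq hf hsq (hS ▸ by positivity)
  · rintro ⟨k₀, hk₀, hsupp⟩
    have hS : ∑ k, f k = f k₀ := Fintype.sum_eq_single k₀ hsupp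
    have hQ : ∑ k, f k ^ 2 = f k₀ ^ 2 :=
      Fintype.sum_eq_single k₀ fun k hk => by rw [hsupp k hk, zero_pow two_ne_zero]
    rw [hS, hQ, hk₀]
    field_simp
    ring

theorem m_inf_separating_general (K : ℕ) (β : ℝ) (hβ0 : 0 < β) (hβ : β < 1 / 2) :
    (∀ f : Fin K → ℝ, (∀ k, 0 ≤ f k) →
      1 - 1 / β ≤ β * (∑ k, (f k) ^ 2)
        + (1 / 2) * (∑ k1, ∑ k2, if k1 = k2 then 0 else f k1 * f k2)
        - 2 * (∑ k, f k) + 1) ∧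
    (∀ f : Fin K → ℝ, (∀ k, 0 ≤ f k) →
      (β * (∑ k, (f k) ^ 2)
        + (1 / 2) * (∑ k1, ∑ k2, if k1 = k2 then 0 else f k1 * f k2)
        - 2 * (∑ k, f k) + 1 = 1 - 1 / β
        ↔ ∃ k0, f k0 = 1 / β ∧ ∀ k, k ≠ k0 → f k = 0)) :=
  ⟨fun _ hf => one_sub_inv_le_separationObjective hβ0 hβ.le hf,
    fun _ hf => separationObjective_eq_iff hβ0 hβ hf⟩

theorem m_inf_separating (K : ℕ) (hK : 1 ≤ K) (β : ℝ) (hβ0 : 0 < β) (hβ : β < 1 / 2) :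
    (∀ f : Fin K → ℝ, (∀ k, 0 ≤ f k) →
      1 - 1 / β ≤ β * (∑ k, (f k) ^ 2)
        + (1 / 2) * (∑ k1, ∑ k2, if k1 = k2 then 0 else f k1 * f k2)
        - 2 * (∑ k, f k) + 1) ∧
    (∀ f : Fin K → ℝ, (∀ k, 0 ≤ f k) →
      (β * (∑ k, (f k) ^ 2)
        + (1 / 2) * (∑ k1, ∑ k2, if k1 = k2 then 0 else f k1 * f k2)
        - 2 * (∑ k, f k) + 1 = 1 - 1 / β
        ↔ ∃ k0, f k0 = 1 / β ∧ ∀ k, k ≠ k0 → f k = 0)) :=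
  m_inf_separating_general K β hβ0 hβ
end

section
/- Let K ≥ 1 and c < 0 be reals. Every local minimum of t(v) = c·∑_{k=1}^K v_k⁴ + 2 on the unit sphere {v ∈ ℝ^K : ∑ v_k² = 1} is a point where all coordinates but one are zero. -/
/-!
If two coordinates `v i, v j` of a point on the sphere are nonzero, say `v i ^ 2 ≤ v j ^ 2`, move
an amount `t > 0` of squared mass from `i` to `j`, keeping signs. This stays on the sphere and
changes `∑ v k ^ 4` by `2t (v j ^ 2 - v i ^ 2 + t) > 0`, so with `c < 0` it strictly decreases the
cost along a curve tending to `v`: `v` is not a local minimum.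
-/

open Filter Function Set Topology

lemma Finset.sum_update_eq_add_sub {ι M : Type*} [Fintype ι] [DecidableEq ι] [AddCommGroup M]
    (g : ι → M) (i : ι) (x : M) :
    ∑ k, update g i x k = ∑ k, g k + (x - g i) := by
  rw [Finset.sum_update_of_mem (Finset.mem_univ i), ← Finset.add_sum_erase _ _ (Finset.mem_univ i),
    Finset.sdiff_singleton_eq_erase]
  abel

lemma Finset.sum_update_update_eq_add_sub {ι M : Type*} [Fintype ι] [DecidableEq ι]
    [AddCommGroup M] (g : ι → M) {i j : ι} (hji : j ≠ i) (x y : M) :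
    ∑ k, update (update g i x) j y k = ∑ k, g k + (x - g i) + (y - g j) := by
  rw [Finset.sum_update_eq_add_sub, Finset.sum_update_eq_add_sub, update_of_ne hji]

lemma IsLocalMinOn.not_eventually_lt_comp {α β γ : Type*} [TopologicalSpace α] [Preorder γ]
    {f : α → γ} {s : Set α} {a : α} {l : Filter β} [l.NeBot] {p : β → α}
    (hmin : IsLocalMinOn f s a) (hp : Tendsto p l (𝓝[s] a)) :
    ¬ ∀ᶠ t in l, f (p t) < f a := fun hlt ↦
  let ⟨_, hle, hlt⟩ := ((hp.eventually hmin).and hlt).exists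
  hle.not_gt hlt

lemma sq_mul_sqrt_one_sub_div_sq {a t : ℝ} (ha : a ≠ 0) (ht : t ≤ a ^ 2) :
    (a * √(1 - t / a ^ 2)) ^ 2 = a ^ 2 - t := by
  have : 0 ≤ 1 - t / a ^ 2 := by
    rw [sub_nonneg, div_le_one (by positivity)]; exact ht
  rw [mul_pow, Real.sq_sqrt this]
  field_simp

section transferMass

variable {ι : Type*} [DecidableEq ι]

noncomputable def transferMass (v : ι → ℝ) (i j : ι) (t : ℝ) : ι → ℝ :=
  update (update v i (v i * √(1 - t / v i ^ 2))) j (v j * √(1 + t / v j ^ 2))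

variable (v : ι → ℝ) (i j : ι)

@[simp]
lemma transferMass_zero : transferMass v i j 0 = v := by
  simp [transferMass]

lemma continuous_transferMass : Continuous (transferMass v i j) := by
  unfold transferMass
  fun_prop

variable {v i j}

lemma sq_transferMass (hi : v i ≠ 0) (hj : v j ≠ 0) {t : ℝ} (hti : t ≤ v i ^ 2)
    (htj : -t ≤ v j ^ 2) (k : ι) :
    transferMass v i j t k ^ 2 = update (update (v · ^ 2) i (v i ^ 2 - t)) j (v j ^ 2 + t) k := by
  have hj' : (v j * √(1 + t / v j ^ 2)) ^ 2 = v j ^ 2 + t := by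
    simpa only [neg_div, sub_neg_eq_add] using sq_mul_sqrt_one_sub_div_sq hj htj
  simp only [transferMass, update_apply]
  split_ifs <;> simp [sq_mul_sqrt_one_sub_div_sq hi hti, hj']

variable [Fintype ι]

lemma sum_sq_transferMass (hi : v i ≠ 0) (hj : v j ≠ 0) (hji : j ≠ i) {t : ℝ}
    (hti : t ≤ v i ^ 2) (htj : -t ≤ v j ^ 2) :
    ∑ k, transferMass v i j t k ^ 2 = ∑ k, v k ^ 2 := by
  simp_rw [sq_transferMass hi hj hti htj, Finset.sum_update_update_eq_add_sub _ hji]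
  ring

lemma sum_pow_four_transferMass (hi : v i ≠ 0) (hj : v j ≠ 0) (hji : j ≠ i) {t : ℝ}
    (hti : t ≤ v i ^ 2) (htj : -t ≤ v j ^ 2) :
    ∑ k, transferMass v i j t k ^ 4 = ∑ k, v k ^ 4 + 2 * t * (v j ^ 2 - v i ^ 2 + t) := by
  have hsq (x : ℝ) : x ^ 4 = (x ^ 2) ^ 2 := by ring
  simp_rw [hsq, sq_transferMass hi hj hti htj, apply_update (fun _ (x : ℝ) ↦ x ^ 2),
    Finset.sum_update_update_eq_add_sub _ hji]
  ring

end transferMass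

lemma not_isLocalMinOn_mul_sum_pow_four_of_two_ne_zero {ι : Type*} [Fintype ι] [DecidableEq ι]
    {c d r : ℝ} (hc : c < 0) {v : ι → ℝ} (hv : ∑ k, v k ^ 2 = r) {i j : ι} (hji : j ≠ i)
    (hi : v i ≠ 0) (hj : v j ≠ 0) (hle : v i ^ 2 ≤ v j ^ 2) :
    ¬ IsLocalMinOn (fun w : ι → ℝ ↦ c * ∑ k, w k ^ 4 + d) {w | ∑ k, w k ^ 2 = r} v := by
  intro hmin
  have hsmall : ∀ᶠ t in 𝓝[>] (0 : ℝ), t ∈ Ioo 0 (v i ^ 2) := Ioo_mem_nhdsGT (by positivity)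
  have hbounds {t : ℝ} (ht : t ∈ Ioo 0 (v i ^ 2)) : t ≤ v i ^ 2 ∧ -t ≤ v j ^ 2 :=
    ⟨ht.2.le, by nlinarith [ht.1, sq_nonneg (v j)]⟩
  refine hmin.not_eventually_lt_comp (p := transferMass v i j) (l := 𝓝[>] 0) ?_ ?_
  · refine tendsto_nhdsWithin_iff.2 ⟨?_, hsmall.mono fun t ht ↦ ?_⟩
    · simpa using ((continuous_transferMass v i j).tendsto 0).mono_left nhdsWithin_le_nhds
    · exact (sum_sq_transferMass hi hj hji (hbounds ht).1 (hbounds ht).2).trans hv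
  · filter_upwards [hsmall] with t ht
    rw [sum_pow_four_transferMass hi hj hji (hbounds ht).1 (hbounds ht).2]
    nlinarith [ht.1, mul_pos ht.1 (show 0 < v j ^ 2 - v i ^ 2 + t by linarith [ht.1])]

theorem sphere_quartic_local_min_general (K : ℕ) (c : ℝ) (hc : c < 0)
    (v : Fin K → ℝ) (hv : (∑ k, (v k) ^ 2) = 1)
    (hmin : IsLocalMinOn (fun w : Fin K → ℝ => c * (∑ k, (w k) ^ 4) + 2)
      {w : Fin K → ℝ | (∑ k, (w k) ^ 2) = 1} v) :
    ∃ k0, ∀ k, k ≠ k0 → v k = 0 := by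
  by_contra! hspread
  obtain ⟨i, hi⟩ : ∃ i, v i ≠ 0 := by
    by_contra! h
    simp [h] at hv
  obtain ⟨j, hji, hj⟩ := hspread i
  rcases le_total (v i ^ 2) (v j ^ 2) with hle | hle
  · exact not_isLocalMinOn_mul_sum_pow_four_of_two_ne_zero hc hv hji hi hj hle hmin
  · exact not_isLocalMinOn_mul_sum_pow_four_of_two_ne_zero hc hv hji.symm hj hi hle hmin

theorem sphere_quartic_local_min (K : ℕ) (hK : 1 ≤ K) (c : ℝ) (hc : c < 0)
    (v : Fin K → ℝ) (hv : (∑ k, (v k) ^ 2) = 1)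
    (hmin : IsLocalMinOn (fun w : Fin K → ℝ => c * (∑ k, (w k) ^ 4) + 2)
      {w : Fin K → ℝ | (∑ k, (w k) ^ 2) = 1} v) :
    ∃ k0, ∀ k, k ≠ k0 → v k = 0 :=
  sphere_quartic_local_min_general K c hc v hv hmin
end
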